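/- arXiv:2501.00858 — 2 statements merged into one kernel-verified Lean document; each statement's English description precedes it below -/
import Mathlib

section
/- Let $p : \mathbb{R} \to \mathbb{R}$ be a polynomial of degree at most $N$, and let $S \subset \mathbb{R}$ be a measurable set. Then $\int_S |p'(u)|\, du \le 2(N+1) \sup_{u \in S} |p(u)|$, provided the supremum is finite. -/
/-!
Between consecutive zeros of `p'` the polynomial is monotone, so the integral of `|p'|` over
the part of `S` lying there is at most the oscillation of `p` between the extreme points of that
part, hence at most `2 M`. Since `p'` has at most `N` real zeros, they cut `ℝ` into at most `N + 1`
such intervals. Boundedness of `S` (needed for the extreme points to exist) comes from `|p| → ∞`.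
-/

open MeasureTheory Set Polynomial

theorem IsPreconnected.forall_pos_or_forall_neg {s : Set ℝ} {f : ℝ → ℝ} (hs : IsPreconnected s)
    (hf : ContinuousOn f s) (hf0 : ∀ x ∈ s, f x ≠ 0) :
    (∀ x ∈ s, 0 < f x) ∨ (∀ x ∈ s, f x < 0) := by
  by_contra! h
  obtain ⟨⟨x, hx, hfx⟩, ⟨y, hy, hfy⟩⟩ := h
  obtain ⟨z, hz, hfz⟩ :=
    (hs.image f hf).ordConnected.out (mem_image_of_mem f hx) (mem_image_of_mem f hy) ⟨hfx, hfy⟩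
  exact hf0 z hz hfz

theorem integral_Ioo_abs_deriv_le {f f' : ℝ → ℝ} {a b : ℝ} (hab : a ≤ b)
    (hf : ∀ x, HasDerivAt f (f' x) x) (hf' : Continuous f') (h0 : ∀ x ∈ Ioo a b, f' x ≠ 0) :
    ∫ x in Ioo a b, |f' x| ≤ |f b - f a| := by
  have hFTC : ∫ x in Ioo a b, f' x = f b - f a := by
    rw [← integral_Ioc_eq_integral_Ioo, ← intervalIntegral.integral_of_le hab]
    exact intervalIntegral.integral_eq_sub_of_hasDerivAt (fun x _ => hf x)
      (hf'.intervalIntegrable a b)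
  rcases isPreconnected_Ioo.forall_pos_or_forall_neg hf'.continuousOn h0 with hpos | hneg
  · rw [setIntegral_congr_fun measurableSet_Ioo fun x hx => abs_of_pos (hpos x hx), hFTC]
    exact le_abs_self _
  · rw [setIntegral_congr_fun measurableSet_Ioo fun x hx => abs_of_neg (hneg x hx),
      integral_neg, hFTC]
    exact neg_le_abs _

theorem setIntegral_abs_deriv_le {f f' : ℝ → ℝ} {S : Set ℝ} {M : ℝ}
    (hf : ∀ x, HasDerivAt f (f' x) x) (hf' : Continuous f') (hS : Bornology.IsBounded S)
    (hM0 : 0 ≤ M) (hM : ∀ x ∈ S, |f x| ≤ M) (h0 : ∀ x ∈ S, ∀ y ∈ S, ∀ z ∈ Ioo x y, f' z ≠ 0) :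
    ∫ x in S, |f' x| ≤ 2 * M := by
  rcases S.eq_empty_or_nonempty with rfl | hne
  · simpa using hM0
  set a := sInf S
  set b := sSup S
  have hSab : S ⊆ Icc a b := fun x hx => ⟨csInf_le hS.bddBelow hx, le_csSup hS.bddAbove hx⟩
  have hfc : Continuous f := continuous_iff_continuousAt.2 fun x => (hf x).continuousAt
  have hM_closure : ∀ x ∈ closure S, |f x| ≤ M := fun x hx =>
    closure_minimal hM (isClosed_le hfc.abs continuous_const) hx
  have h0ab : ∀ z ∈ Ioo a b, f' z ≠ 0 := by
    rintro z ⟨haz, hzb⟩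
    obtain ⟨x, hx, hxz⟩ := exists_lt_of_csInf_lt hne haz
    obtain ⟨y, hy, hzy⟩ := exists_lt_of_lt_csSup hne hzb
    exact h0 x hx y hy z ⟨hxz, hzy⟩
  calc ∫ x in S, |f' x| ≤ ∫ x in Icc a b, |f' x| :=
        setIntegral_mono_set hf'.abs.integrableOn_Icc
          (Filter.Eventually.of_forall fun _ => abs_nonneg _) hSab.eventuallyLE
    _ = ∫ x in Ioo a b, |f' x| := integral_Icc_eq_integral_Ioo
    _ ≤ |f b - f a| := integral_Ioo_abs_deriv_le (csInf_le_csSup hne hS.bddBelow hS.bddAbove)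
        hf hf' h0ab
    _ ≤ |f b| + |f a| := abs_sub _ _
    _ ≤ 2 * M := by
      linarith [hM_closure b (csSup_mem_closure hne hS.bddAbove),
        hM_closure a (csInf_mem_closure hne hS.bddBelow)]

theorem setIntegral_le_card_succ_mul {g : ℝ → ℝ} {S : Set ℝ} {C : ℝ} (hg : IntegrableOn g S)
    (R : Finset ℝ) (hpiece : ∀ T ⊆ S, (∀ x ∈ T, ∀ y ∈ T, ∀ z ∈ R, z ∉ Ioo x y) → ∫ x in T, g x ≤ C) :
    ∫ x in S, g x ≤ (R.card + 1) * C := by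
  classical
  induction R using Finset.induction_on_max generalizing S with
  | empty => simpa using hpiece S subset_rfl (by simp)
  | insert t R hlt ih =>
    have hleft : ∫ x in S ∩ Iic t, g x ≤ (R.card + 1) * C := by
      refine ih (hg.mono_set inter_subset_left) fun T hT hcut =>
        hpiece T (hT.trans inter_subset_left) fun x hx y hy z hz => ?_
      rcases Finset.mem_insert.1 hz with rfl | hzR
      · exact fun hzxy => not_le.2 hzxy.2 (hT hy).2
      · exact hcut x hx y hy z hzR
    have hright : ∫ x in S \ Iic t, g x ≤ C := by
      refine hpiece _ sdiff_subset fun x hx y _ z hz hzxy => (hx.2 ?_).elim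
      rcases Finset.mem_insert.1 hz with rfl | hzR
      · exact hzxy.1.le
      · exact (hzxy.1.trans (hlt z hzR)).le
    rw [← integral_inter_add_sdiff measurableSet_Iic hg,
      Finset.card_insert_of_notMem fun htR => lt_irrefl t (hlt t htR)]
    push_cast
    linarith

theorem Polynomial.isBounded_of_forall_abs_eval_le {p : ℝ[X]} (hp : 0 < p.degree) {S : Set ℝ}
    {M : ℝ} (hM : ∀ x ∈ S, |p.eval x| ≤ M) : Bornology.IsBounded S :=
  ((p.isProperMap_eval hp).isCompact_preimage isCompact_Icc).isBounded.subset
    fun x hx => abs_le.1 (hM x hx)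

theorem Polynomial.card_roots_toFinset_derivative_le {p : ℝ[X]} {N : ℕ} (hp : p.natDegree ≤ N) :
    (derivative p).roots.toFinset.card ≤ N :=
  calc (derivative p).roots.toFinset.card ≤ (derivative p).roots.card :=
        Multiset.toFinset_card_le _
    _ ≤ (derivative p).natDegree := card_roots' _
    _ ≤ N := (natDegree_derivative_le p).trans (Nat.sub_le_of_le_add (by omega))

theorem stmt1_general (N : ℕ) (p : Polynomial ℝ) (hp : p.natDegree ≤ N)
    (S : Set ℝ) (M : ℝ) (hM0 : 0 ≤ M)
    (hM : ∀ u ∈ S, |p.eval u| ≤ M) :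
    ∫ u in S, |(Polynomial.derivative p).eval u| ≤ 2 * (N + 1) * M := by
  by_cases hq : derivative p = 0
  · simp only [hq, eval_zero, abs_zero, integral_zero]
    positivity
  have hS : Bornology.IsBounded S := isBounded_of_forall_abs_eval_le
    (natDegree_pos_iff_degree_pos.1 (Nat.pos_of_ne_zero (derivative_ne_zero.1 hq))) hM
  have hint : IntegrableOn (fun u => |(derivative p).eval u|) S :=
    ((derivative p).continuous.abs.continuousOn.integrableOn_compact hS.isCompact_closure).mono_set
      subset_closure
  have hroots : ((derivative p).roots.toFinset.card : ℝ) ≤ N := by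
    exact_mod_cast card_roots_toFinset_derivative_le hp
  calc ∫ u in S, |(derivative p).eval u| ≤ ((derivative p).roots.toFinset.card + 1) * (2 * M) :=
        setIntegral_le_card_succ_mul hint _ fun T hT hcut =>
          setIntegral_abs_deriv_le p.hasDerivAt (derivative p).continuous (hS.subset hT) hM0
            (fun x hx => hM x (hT hx)) fun x hx y hy z hz hz0 =>
              hcut x hx y hy z (by simpa [mem_roots hq] using hz0) hz
    _ ≤ 2 * (N + 1) * M := by nlinarith

/-- the integral of `|p'|` over a set is controlled by the sup of `|p|`. -/
theorem stmt1 (N : ℕ) (p : Polynomial ℝ) (hp : p.natDegree ≤ N)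
    (S : Set ℝ) (hS : MeasurableSet S) (M : ℝ) (hM0 : 0 ≤ M)
    (hM : ∀ u ∈ S, |p.eval u| ≤ M) :
    ∫ u in S, |(Polynomial.derivative p).eval u| ≤ 2 * (N + 1) * M :=
  stmt1_general N p hp S M hM0 hM
end

section
/- Let $d \ge 2$ and let $\gamma : \mathbb{R}^{d-1} \to \mathbb{R}$ be $C^3$ on $B(\mu_0, 2\delta)$. Let $\mu_\kappa \in B(\mu_0, 2\delta)$, set $\gamma_\kappa(u) = \rho^{-1}(\gamma(u) - \gamma(\mu_\kappa) - \nabla\gamma(\mu_\kappa)\cdot(u - \mu_\kappa))$ for a parameter $\rho > 0$, and let $e_1$ be a unit eigenvector of $H\gamma(\mu_0)$ with $c_\kappa := \rho^{-1}\langle H\gamma(\mu_\kappa)e_1, e_1\rangle$. Suppose that on $B(\mu_0, 2\delta)$: (i) all eigenvalues of $H\gamma$ orthogonal to $e_1$, i.e. $|\langle H\gamma(\mu_\kappa)e_j, e_j\rangle| \le K\rho$ for $j \ge 2$ where $e_j$ is an orthonormal eigenbasis of $H\gamma(\mu_\kappa)$ containing $e_1$; (ii) third derivatives of $\gamma$ are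 bounded by $M$ with $M\delta^3 \le \rho\eta^2$. Then for every $u \in B(\mu_0, 2\delta)$ with $|\langle e_j, u - \mu_\kappa\rangle| \le \eta$ for all $j \ge 2$ and $|u - \mu_\kappa| \le 4\delta$, one has $|\gamma_\kappa(u) - \frac{c_\kappa}{2}(\langle u - \mu_\kappa, e_1\rangle)^2| \le C_d (K + 1)\eta^2$, with $C_d$ depending only on $d$. -/
open Set RealInnerProductSpace

section Aux

variable {E : Type*} [NormedAddCommGroup E] [NormedSpace ℝ E]

private lemma fderiv_apply_const'' {F : Type*} [NormedAddCommGroup F] [NormedSpace ℝ F]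
    {G : E → E →L[ℝ] F} {x : E} (hG : DifferentiableAt ℝ G x)
    (c v : E) : fderiv ℝ (fun y => G y c) x v = fderiv ℝ G x v c := by
  rw [fderiv_clm_apply hG (differentiableAt_const c)]; simp

private lemma iteratedFDeriv_three_apply'' (f : E → ℝ) (z a b c : E) :
    iteratedFDeriv ℝ 3 f z ![a, b, c] =
      fderiv ℝ (fderiv ℝ (fderiv ℝ f)) z a b c := by
  rw [iteratedFDeriv_succ_apply_right, iteratedFDeriv_two_apply]
  rfl

private lemma taylor_segment' (γ : E → ℝ) (s : Set E) (hs : IsOpen s)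
    (hγ : ContDiffOn ℝ 3 γ s)
    (μ u : E) (hseg : ∀ t ∈ Icc (0:ℝ) 1, μ + t • (u - μ) ∈ s)
    (B : ℝ)
    (hB : ∀ x ∈ s, |iteratedFDeriv ℝ 3 γ x ![u - μ, u - μ, u - μ]| ≤ B) :
    |γ u - γ μ - fderiv ℝ γ μ (u - μ) -
      fderiv ℝ (fun x => fderiv ℝ γ x (u - μ)) μ (u - μ) / 2| ≤ B / 6 := by
  set h := u - μ with hh
  set L : ℝ → E := fun t => μ + t • h with hL
  have hμs : μ ∈ s := by simpa using hseg 0 (by norm_num)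
  have hdγ : ∀ x ∈ s, DifferentiableAt ℝ γ x := fun x hx =>
    ((hγ.differentiableOn (by norm_num)) x hx).differentiableAt (hs.mem_nhds hx)
  have hC2 : ContDiffOn ℝ 2 (fderiv ℝ γ) s := hγ.fderiv_of_isOpen hs (by norm_num)
  have hF1d : ∀ x ∈ s, DifferentiableAt ℝ (fderiv ℝ γ) x := fun x hx =>
    ((hC2.differentiableOn (by norm_num)) x hx).differentiableAt (hs.mem_nhds hx)
  have hC1 : ContDiffOn ℝ 1 (fderiv ℝ (fderiv ℝ γ)) s := hC2.fderiv_of_isOpen hs (by norm_num)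
  have hF2d : ∀ x ∈ s, DifferentiableAt ℝ (fderiv ℝ (fderiv ℝ γ)) x := fun x hx =>
    ((hC1.differentiableOn (by norm_num)) x hx).differentiableAt (hs.mem_nhds hx)
  have hLd : ∀ t : ℝ, HasDerivAt L h t := fun t => by
    exact (((hasDerivAt_id t).smul_const h).const_add μ).congr_deriv (one_smul ℝ h)
  set g : ℝ → ℝ := fun t => γ (L t) with hgdef
  set g1 : ℝ → ℝ := fun t => fderiv ℝ γ (L t) h with hg1def
  set g2 : ℝ → ℝ := fun t => fderiv ℝ (fderiv ℝ γ) (L t) h h with hg2def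
  set g3 : ℝ → ℝ := fun t => fderiv ℝ (fderiv ℝ (fderiv ℝ γ)) (L t) h h h with hg3def
  have hIccO : ∀ t ∈ Icc (0:ℝ) 1, L t ∈ s := hseg
  have hg : ∀ t ∈ Icc (0:ℝ) 1, HasDerivAt g (g1 t) t := fun t ht =>
    ((hdγ _ (hIccO t ht)).hasFDerivAt).comp_hasDerivAt t (hLd t)
  have hg1 : ∀ t ∈ Icc (0:ℝ) 1, HasDerivAt g1 (g2 t) t := by
    intro t ht
    have h1 : HasFDerivAt (fun x => fderiv ℝ γ x h)
        ((ContinuousLinearMap.apply ℝ ℝ h).comp (fderiv ℝ (fderiv ℝ γ) (L t))) (L t) :=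
      (ContinuousLinearMap.apply ℝ ℝ h).hasFDerivAt.comp (L t)
        (hF1d _ (hIccO t ht)).hasFDerivAt
    exact h1.comp_hasDerivAt t (hLd t)
  have hg2 : ∀ t ∈ Icc (0:ℝ) 1, HasDerivAt g2 (g3 t) t := by
    intro t ht
    have h1 := ((ContinuousLinearMap.apply ℝ ℝ h).hasFDerivAt.comp (L t)
        ((ContinuousLinearMap.apply ℝ (E →L[ℝ] ℝ) h).hasFDerivAt.comp (L t)
          (hF2d _ (hIccO t ht)).hasFDerivAt (f := fderiv ℝ (fderiv ℝ γ)))).comp_hasDerivAt t (hLd t)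
    exact h1
  have uIcc : UniqueDiffOn ℝ (Icc (0:ℝ) 1) := uniqueDiffOn_Icc zero_lt_one
  have it1 : ∀ x ∈ Icc (0:ℝ) 1, iteratedDerivWithin 1 g (Icc 0 1) x = g1 x := by
    intro x hx
    rw [iteratedDerivWithin_one]
    exact ((hg x hx).hasDerivWithinAt).derivWithin (uIcc x hx)
  have it2 : ∀ x ∈ Icc (0:ℝ) 1, iteratedDerivWithin 2 g (Icc 0 1) x = g2 x := by
    intro x hx
    rw [iteratedDerivWithin_succ]
    rw [derivWithin_congr it1 (it1 x hx)]
    exact ((hg1 x hx).hasDerivWithinAt).derivWithin (uIcc x hx)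
  have it3 : ∀ x ∈ Icc (0:ℝ) 1, iteratedDerivWithin 3 g (Icc 0 1) x = g3 x := by
    intro x hx
    rw [iteratedDerivWithin_succ]
    rw [derivWithin_congr it2 (it2 x hx)]
    exact ((hg2 x hx).hasDerivWithinAt).derivWithin (uIcc x hx)
  have hgc : ContDiffOn ℝ 2 g (Icc (0:ℝ) 1) := by
    have hLc : ContDiff ℝ 3 L := contDiff_const.add (contDiff_id.smul contDiff_const)
    exact (hγ.comp hLc.contDiffOn hIccO).of_le (by norm_num)
  have hdiff : DifferentiableOn ℝ (iteratedDerivWithin 2 g (Icc 0 1)) (Ioo 0 1) := by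
    intro x hx
    have hxI := Ioo_subset_Icc_self hx
    exact ((hg2 x hxI).differentiableAt.differentiableWithinAt).congr
      (fun y hy => it2 y (Ioo_subset_Icc_self hy)) (it2 x hxI)
  have hu1 : Set.uIcc (0:ℝ) 1 = Icc 0 1 := Set.uIcc_of_le zero_le_one
  have hu2 : uIoo (0:ℝ) 1 = Ioo 0 1 := uIoo_of_le zero_le_one
  obtain ⟨ξ, hξ, hTay⟩ := taylor_mean_remainder_lagrange (n := 2) (x₀ := 0) (x := 1) zero_ne_one
    (by rw [hu1]; exact hgc) (by rw [hu1, hu2]; exact hdiff)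
  rw [hu1] at hTay
  rw [hu2] at hξ
  have hg1' : g 1 = γ u := by
    show γ (μ + (1:ℝ) • h) = γ u
    rw [one_smul, hh, add_sub_cancel]
  have hg0 : g 0 = γ μ := by simp [hgdef, hL]
  have hTayEval : taylorWithinEval g 2 (Icc (0:ℝ) 1) 0 1 = γ μ + g1 0 + g2 0 / 2 := by
    rw [taylor_within_apply]
    rw [Finset.sum_range_succ, Finset.sum_range_succ, Finset.sum_range_one]
    rw [it1 0 (by norm_num), it2 0 (by norm_num)]
    simp [hg0]
    ring
  have hξI : ξ ∈ Icc (0:ℝ) 1 := Ioo_subset_Icc_self hξ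
  rw [hg1', hTayEval, it3 ξ hξI] at hTay
  have hg1v : g1 0 = fderiv ℝ γ μ h := by simp [hg1def, hL]
  have hg2v : g2 0 = fderiv ℝ (fun x => fderiv ℝ γ x h) μ h := by
    rw [fderiv_apply_const'' (hF1d μ hμs)]
    simp [hg2def, hL]
  have hbound : |g3 ξ| ≤ B := by
    have := hB (L ξ) (hIccO ξ hξI)
    rwa [iteratedFDeriv_three_apply''] at this
  have hTay' : γ u - (γ μ + g1 0 + g2 0 / 2) = g3 ξ / 6 := by
    rw [hTay]; norm_num [Nat.factorial]
  rw [← hg1v, ← hg2v]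
  have heq : γ u - γ μ - g1 0 - g2 0 / 2 = g3 ξ / 6 := by linarith [hTay']
  rw [heq, abs_div, abs_of_pos (by norm_num : (0:ℝ) < 6)]
  exact div_le_div_of_nonneg_right hbound (by norm_num) |>.trans_eq rfl

private lemma trilinear_bound' {n : ℕ} (T : ContinuousMultilinearMap ℝ
      (fun _ : Fin 3 => EuclideanSpace ℝ (Fin n)) ℝ)
    (h : EuclideanSpace ℝ (Fin n)) (M : ℝ)
    (hT : ∀ i j l : Fin n, |T ![EuclideanSpace.single i 1, EuclideanSpace.single j 1,
        EuclideanSpace.single l 1]| ≤ M) :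
    |T ![h, h, h]| ≤ M * (∑ i, |h i|) ^ 3 := by
  classical
  have hrep : h = ∑ i, h i • EuclideanSpace.single i (1:ℝ) := by
    ext j
    rw [WithLp.ofLp_sum, Finset.sum_apply]
    simp [EuclideanSpace.single_apply]
  have hfun : (![h, h, h] : Fin 3 → EuclideanSpace ℝ (Fin n)) = fun _ => h := by
    funext k; fin_cases k <;> rfl
  rw [hfun]
  conv_lhs => rw [show (fun _ : Fin 3 => h)
    = fun _ : Fin 3 => ∑ i, h i • EuclideanSpace.single i (1:ℝ) from funext fun _ => hrep]
  rw [ContinuousMultilinearMap.map_sum]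
  have key : ∀ r : Fin 3 → Fin n,
      T (fun k => h (r k) • EuclideanSpace.single (r k) (1:ℝ)) =
        (∏ k, h (r k)) • T ![EuclideanSpace.single (r 0) 1,
          EuclideanSpace.single (r 1) 1, EuclideanSpace.single (r 2) 1] := by
    intro r
    have harg : (fun k : Fin 3 => EuclideanSpace.single (r k) (1:ℝ)) =
        ![EuclideanSpace.single (r 0) 1, EuclideanSpace.single (r 1) 1,
          EuclideanSpace.single (r 2) 1] := by
      funext k; fin_cases k <;> rfl
    rw [← harg, T.map_smul_univ]
  calc |∑ r : Fin 3 → Fin n, T fun k => h (r k) • EuclideanSpace.single (r k) (1:ℝ)|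
      ≤ ∑ r : Fin 3 → Fin n, |T fun k => h (r k) • EuclideanSpace.single (r k) (1:ℝ)| :=
        Finset.abs_sum_le_sum_abs _ _
    _ ≤ ∑ r : Fin 3 → Fin n, (∏ k, |h (r k)|) * M := by
        refine Finset.sum_le_sum fun r _ => ?_
        rw [key r, smul_eq_mul, abs_mul, Finset.abs_prod]
        exact mul_le_mul_of_nonneg_left (hT (r 0) (r 1) (r 2))
          (Finset.prod_nonneg fun _ _ => abs_nonneg _)
    _ = M * (∑ i, |h i|) ^ 3 := by
        rw [← Finset.sum_mul, mul_comm]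
        congr 1
        rw [show (∑ i, |h i|) ^ 3 = ∏ _k : Fin 3, (∑ i, |h i|) by simp [Finset.prod_const]]
        rw [Finset.prod_univ_sum]
        rfl

private lemma sum_abs_le_card_norm {n : ℕ} (h : EuclideanSpace ℝ (Fin n)) :
    ∑ i, |h i| ≤ n * ‖h‖ := by
  have hi : ∀ i, |h i| ≤ ‖h‖ := fun i => by
    have h1 : (h i : ℝ) = ⟪EuclideanSpace.single i (1:ℝ), h⟫ := by
      simp [EuclideanSpace.inner_single_left]
    rw [h1]
    refine (abs_real_inner_le_norm _ _).trans ?_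
    simp [EuclideanSpace.norm_single]
  calc ∑ i, |h i| ≤ ∑ _i : Fin n, ‖h‖ := Finset.sum_le_sum fun i _ => hi i
    _ = n * ‖h‖ := by simp [Finset.sum_const, nsmul_eq_mul]

private lemma repr_orthonormal {n : ℕ} (hn : 0 < n) (e : Fin n → EuclideanSpace ℝ (Fin n))
    (he : Orthonormal ℝ e)
    (h : EuclideanSpace ℝ (Fin n)) : h = ∑ j, ⟪e j, h⟫ • e j := by
  haveI : Nonempty (Fin n) := ⟨⟨0, hn⟩⟩
  have hcard : Fintype.card (Fin n) = Module.finrank ℝ (EuclideanSpace ℝ (Fin n)) := by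
    simp [finrank_euclideanSpace]
  let bb := basisOfOrthonormalOfCardEqFinrank he hcard
  have hbb : ⇑bb = e := coe_basisOfOrthonormalOfCardEqFinrank he hcard
  let b : OrthonormalBasis (Fin n) ℝ (EuclideanSpace ℝ (Fin n)) :=
    bb.toOrthonormalBasis (by rwa [hbb])
  have hb : ∀ i, b i = e i := by
    intro i
    have := Module.Basis.coe_toOrthonormalBasis bb (by rwa [hbb])
    rw [show b i = (⇑(bb.toOrthonormalBasis (by rwa [hbb]))) i from rfl, this, hbb]
  calc h = ∑ i, ⟪b i, h⟫ • b i := (b.sum_repr' h).symm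
    _ = ∑ j, ⟪e j, h⟫ • e j := Finset.sum_congr rfl fun j _ => by rw [hb]

end Aux

/-- The Hessian of `γ` at `z`, as a bilinear expression. -/
noncomputable def Hess {n : ℕ} (γ : EuclideanSpace ℝ (Fin n) → ℝ)
    (z v w : EuclideanSpace ℝ (Fin n)) : ℝ :=
  fderiv ℝ (fun x => fderiv ℝ γ x w) z v

set_option maxHeartbeats 1600000 in
/-- after removing the affine part at `μκ` and rescaling by `ρ`,
`γ_κ` agrees with the parabola `(c_κ/2)⟨u - μκ, e₁⟩²` up to `O((K+1)η²)`. -/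
theorem stmt15 (d : ℕ) (hd : 2 ≤ d) :
    ∃ Cd : ℝ, 0 < Cd ∧
      ∀ (γ : EuclideanSpace ℝ (Fin (d - 1)) → ℝ)
        (z0 μκ : EuclideanSpace ℝ (Fin (d - 1))) (δ ρ K M η : ℝ)
        (e : Fin (d - 1) → EuclideanSpace ℝ (Fin (d - 1))),
        0 < δ → 0 < ρ → 0 ≤ K → 0 ≤ M → 0 ≤ η →
        μκ ∈ Metric.ball z0 (2 * δ) →
        ContDiffOn ℝ 3 γ (Metric.ball z0 (2 * δ)) →
        Orthonormal ℝ e →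
        (∃ ev0 : ℝ, ∀ w, Hess γ z0 (e ⟨0, by omega⟩) w =
          ev0 * (inner ℝ (e ⟨0, by omega⟩) w : ℝ)) →
        (∀ j, ∃ ev : ℝ, ∀ w, Hess γ μκ (e j) w = ev * (inner ℝ (e j) w : ℝ)) →
        (∀ j : Fin (d - 1), (j : ℕ) ≠ 0 → |Hess γ μκ (e j) (e j)| ≤ K * ρ) →
        (∀ u ∈ Metric.ball z0 (2 * δ), ∀ i j l : Fin (d - 1),
          |iteratedFDeriv ℝ 3 γ u
            ![EuclideanSpace.single i 1, EuclideanSpace.single j 1,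
              EuclideanSpace.single l 1]| ≤ M) →
        M * δ ^ 3 ≤ ρ * η ^ 2 →
        ∀ u ∈ Metric.ball z0 (2 * δ),
          (∀ j : Fin (d - 1), (j : ℕ) ≠ 0 → |(inner ℝ (e j) (u - μκ) : ℝ)| ≤ η) →
          ‖u - μκ‖ ≤ 4 * δ →
          |ρ⁻¹ * (γ u - γ μκ - fderiv ℝ γ μκ (u - μκ)) -
              (ρ⁻¹ * Hess γ μκ (e ⟨0, by omega⟩) (e ⟨0, by omega⟩)) / 2 *
                (inner ℝ (u - μκ) (e ⟨0, by omega⟩) : ℝ) ^ 2| ≤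
            Cd * (K + 1) * η ^ 2 := by
  have hdr : (2:ℝ) ≤ (d:ℝ) := by exact_mod_cast hd
  have hdpos : (0:ℝ) < (d:ℝ) := by linarith
  refine ⟨11 * (d:ℝ)^3, by positivity, ?_⟩
  intro γ z0 μκ δ ρ K M η e hδ hρ hK hM hη hμ hγ he _hz0eig hμeig hKbound h3bound hMδ
    u hu hproj hnorm
  classical
  set s := Metric.ball z0 (2*δ) with hsdef
  have hs : IsOpen s := Metric.isOpen_ball
  set j0 : Fin (d-1) := ⟨0, by omega⟩ with hj0def
  set h : EuclideanSpace ℝ (Fin (d-1)) := u - μκ with hhdef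
  -- segment inside the ball
  have hseg : ∀ t ∈ Icc (0:ℝ) 1, μκ + t • h ∈ s := by
    intro t ht
    have hmem := (convex_ball z0 (2*δ)) hμ hu (sub_nonneg.2 ht.2) ht.1
      (by ring : (1 - t) + t = 1)
    have heq : μκ + t • h = (1-t) • μκ + t • u := by
      rw [hhdef]; module
    rwa [heq]
  -- third derivative bound along the segment
  have hB : ∀ x ∈ s, |iteratedFDeriv ℝ 3 γ x ![h, h, h]| ≤ M * (∑ i, |h i|)^3 :=
    fun x hx => trilinear_bound' _ h M (h3bound x hx)
  have htaylor := taylor_segment' γ s hs hγ μκ u hseg _ hB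
  -- bound on B
  have hsum : ∑ i, |h i| ≤ (d:ℝ) * (4*δ) := by
    calc ∑ i, |h i| ≤ (d-1 : ℕ) * ‖h‖ := sum_abs_le_card_norm h
      _ ≤ (d:ℝ) * (4*δ) := by
          apply mul_le_mul _ hnorm (norm_nonneg _) (le_of_lt hdpos)
          exact_mod_cast Nat.cast_le.2 (Nat.sub_le d 1)
  have hBle : M * (∑ i, |h i|)^3 ≤ 64 * (d:ℝ)^3 * (ρ * η^2) := by
    have h1 : (∑ i, |h i|)^3 ≤ ((d:ℝ) * (4*δ))^3 :=
      pow_le_pow_left₀ (Finset.sum_nonneg fun _ _ => abs_nonneg _) hsum 3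
    calc M * (∑ i, |h i|)^3 ≤ M * ((d:ℝ) * (4*δ))^3 :=
          mul_le_mul_of_nonneg_left h1 hM
      _ = 64 * (d:ℝ)^3 * (M * δ^3) := by ring
      _ ≤ 64 * (d:ℝ)^3 * (ρ * η^2) := by
          apply mul_le_mul_of_nonneg_left hMδ
          positivity
  -- eigen decomposition
  choose ev hev using hμeig
  have hevval : ∀ j, ev j = Hess γ μκ (e j) (e j) := by
    intro j
    have h1 := hev j (e j)
    have h2 : ⟪e j, e j⟫ = (1:ℝ) := by
      rw [real_inner_self_eq_norm_sq, he.1 j]; norm_num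
    rw [h1, h2, mul_one]
  have hrep : h = ∑ j, ⟪e j, h⟫ • e j := repr_orthonormal (by omega) e he h
  have hlin : ∀ (A : EuclideanSpace ℝ (Fin (d-1)) →L[ℝ] ℝ),
      A h = ∑ j, ⟪e j, h⟫ • A (e j) := by
    intro A
    conv_lhs => rw [hrep]
    rw [map_sum]
    exact Finset.sum_congr rfl fun j _ => A.map_smul _ _
  have hexp : Hess γ μκ h h = ∑ j, ⟪e j, h⟫ * (ev j * ⟪e j, h⟫) := by
    have h1 := hlin (fderiv ℝ (fun x => fderiv ℝ γ x h) μκ)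
    calc Hess γ μκ h h = ∑ j, ⟪e j, h⟫ • Hess γ μκ (e j) h := h1
      _ = ∑ j, ⟪e j, h⟫ * (ev j * ⟪e j, h⟫) :=
          Finset.sum_congr rfl fun j _ => by rw [smul_eq_mul, hev j h]
  -- split off the j0 term
  set S : ℝ := ∑ j ∈ Finset.univ.erase j0, ⟪e j, h⟫ * (ev j * ⟪e j, h⟫) with hSdef
  have hsplit : Hess γ μκ h h = ⟪e j0, h⟫ * (ev j0 * ⟪e j0, h⟫) + S := by
    rw [hexp, ← Finset.add_sum_erase _ _ (Finset.mem_univ j0)]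
  have hSbound : |S| ≤ (d:ℝ) * (K * ρ * η^2) := by
    have hterm : ∀ j ∈ Finset.univ.erase j0, |⟪e j, h⟫ * (ev j * ⟪e j, h⟫)| ≤ K * ρ * η^2 := by
      intro j hj
      have hjne : (j : ℕ) ≠ 0 := by
        intro hc
        exact (Finset.mem_erase.1 hj).1 (Fin.ext hc)
      have hev_le : |ev j| ≤ K * ρ := by rw [hevval j]; exact hKbound j hjne
      have hc_le : |⟪e j, h⟫| ≤ η := hproj j hjne
      calc |⟪e j, h⟫ * (ev j * ⟪e j, h⟫)| = |ev j| * (|⟪e j, h⟫| * |⟪e j, h⟫|) := by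
            rw [abs_mul, abs_mul]; ring
        _ ≤ (K * ρ) * (η * η) := by
            apply mul_le_mul hev_le _ (by positivity) (by positivity)
            exact mul_le_mul hc_le hc_le (abs_nonneg _) hη
        _ = K * ρ * η^2 := by ring
    calc |S| ≤ ∑ j ∈ Finset.univ.erase j0, |⟪e j, h⟫ * (ev j * ⟪e j, h⟫)| :=
          Finset.abs_sum_le_sum_abs _ _
      _ ≤ (Finset.univ.erase j0).card • (K * ρ * η^2) :=
          Finset.sum_le_card_nsmul _ _ _ hterm
      _ ≤ (d:ℝ) * (K * ρ * η^2) := by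
          rw [nsmul_eq_mul]
          apply mul_le_mul_of_nonneg_right _ (by positivity)
          have hcle : (Finset.univ.erase j0).card ≤ d := by
            calc (Finset.univ.erase j0).card ≤ (Finset.univ : Finset (Fin (d-1))).card :=
                  Finset.card_le_card (Finset.erase_subset _ _)
              _ = d - 1 := by simp
              _ ≤ d := Nat.sub_le d 1
          exact_mod_cast Nat.cast_le.2 hcle
  -- the Taylor remainder
  have hA : |γ u - γ μκ - fderiv ℝ γ μκ h - Hess γ μκ h h / 2| ≤ (M * (∑ i, |h i|)^3) / 6 := by
    exact htaylor
  -- final arithmetic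
  have hinner : (inner ℝ h (e j0) : ℝ) = ⟪e j0, h⟫ := real_inner_comm _ _
  have hkey : ρ⁻¹ * (γ u - γ μκ - fderiv ℝ γ μκ h) -
      (ρ⁻¹ * Hess γ μκ (e j0) (e j0)) / 2 * (inner ℝ h (e j0) : ℝ)^2 =
      ρ⁻¹ * ((γ u - γ μκ - fderiv ℝ γ μκ h - Hess γ μκ h h / 2) + S / 2) := by
    rw [hinner, ← hevval j0, hsplit]
    ring
  rw [hkey]
  have hρinv : (0:ℝ) ≤ ρ⁻¹ := by positivity
  calc |ρ⁻¹ * ((γ u - γ μκ - fderiv ℝ γ μκ h - Hess γ μκ h h / 2) + S / 2)|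
      = ρ⁻¹ * |(γ u - γ μκ - fderiv ℝ γ μκ h - Hess γ μκ h h / 2) + S / 2| := by
        rw [abs_mul, abs_of_nonneg hρinv]
    _ ≤ ρ⁻¹ * ((M * (∑ i, |h i|)^3) / 6 + (d:ℝ) * (K * ρ * η^2) / 2) := by
        apply mul_le_mul_of_nonneg_left _ hρinv
        calc |(γ u - γ μκ - fderiv ℝ γ μκ h - Hess γ μκ h h / 2) + S / 2|
            ≤ |γ u - γ μκ - fderiv ℝ γ μκ h - Hess γ μκ h h / 2| + |S| / 2 := by
              refine (abs_add_le _ _).trans ?_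
              rw [abs_div]
              norm_num
          _ ≤ (M * (∑ i, |h i|)^3) / 6 + (d:ℝ) * (K * ρ * η^2) / 2 := by
              apply add_le_add hA
              linarith [hSbound]
    _ ≤ ρ⁻¹ * (64 * (d:ℝ)^3 * (ρ * η^2) / 6 + (d:ℝ) * (K * ρ * η^2) / 2) := by
        apply mul_le_mul_of_nonneg_left _ hρinv
        apply add_le_add _ le_rfl
        linarith [hBle]
    _ = (64 * (d:ℝ)^3 / 6) * η^2 + ((d:ℝ)/2) * (K * η^2) := by
        field_simp
    _ ≤ 11 * (d:ℝ)^3 * (K + 1) * η^2 := by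
        have hd3 : (d:ℝ) ≤ (d:ℝ)^3 := by
          nlinarith [mul_le_mul_of_nonneg_left hdr (le_of_lt hdpos),
            mul_le_mul_of_nonneg_left hdr (mul_nonneg (le_of_lt hdpos) (le_of_lt hdpos))]
        have hη2 : (0:ℝ) ≤ η^2 := by positivity
        have hKη : (0:ℝ) ≤ K * η^2 := by positivity
        nlinarith [mul_nonneg (mul_nonneg (by linarith : (0:ℝ) ≤ (d:ℝ)^3) hK) hη2,
          mul_nonneg (by linarith : (0:ℝ) ≤ (d:ℝ)^3) hη2]
end
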